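/- arXiv:2201.02147 — 9 statements merged into one kernel-verified Lean document; each statement's English description precedes it below -/
import Mathlib

section
/- (Wakamatsu-type lemma) Let \(\mathcal{A}\) be an abelian category, \(\mathcal{F}\) a full subcategory closed under extensions, and \(f : F \to E\) an \(\mathcal{F}\)-cover of an object \(E\) with kernel \(K = \ker f\). Then \(\mathrm{Ext}^1_{\mathcal{A}}(F', K) = 0\) for every \(F' \in \mathcal{F}\); equivalently, every short exact sequence \(0 \to K \to Y \to F' \to 0\) with \(F' \in \mathcal{F}\) splits. -/
open CategoryTheory Limits

universe v u

namespace Mut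

variable {C : Type u} [Category.{v} C]

/-- A class of objects closed under isomorphisms. -/
def IsoClosed (S : Set C) : Prop := ∀ ⦃X Y : C⦄, (X ≅ Y) → X ∈ S → Y ∈ S

/-- `g : E ⟶ X` is an `M`-precover of `X`. -/
def IsPrecover (M : Set C) {E X : C} (g : E ⟶ X) : Prop :=
  E ∈ M ∧ ∀ ⦃E' : C⦄ (f : E' ⟶ X), E' ∈ M → ∃ h : E' ⟶ E, h ≫ g = f

/-- `g : E ⟶ X` is an `M`-cover of `X`. -/
def IsCover (M : Set C) {E X : C} (g : E ⟶ X) : Prop :=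
  IsPrecover M g ∧ ∀ h : E ⟶ E, h ≫ g = g → IsIso h

/-- `g : X ⟶ E` is an `M`-preenvelope of `X`. -/
def IsPreenvelope (M : Set C) {X E : C} (g : X ⟶ E) : Prop :=
  E ∈ M ∧ ∀ ⦃E' : C⦄ (f : X ⟶ E'), E' ∈ M → ∃ h : E ⟶ E', g ≫ h = f

/-- `g : X ⟶ E` is an `M`-envelope of `X`. -/
def IsEnvelope (M : Set C) {X E : C} (g : X ⟶ E) : Prop :=
  IsPreenvelope M g ∧ ∀ h : E ⟶ E, g ≫ h = g → IsIso h

section Abelian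

variable [Abelian C]

/-- `0 ⟶ A ⟶ X ⟶ B ⟶ 0` is a short exact sequence. -/
def SES {A X B : C} (i : A ⟶ X) (p : X ⟶ B) : Prop :=
  ∃ w : i ≫ p = 0, (ShortComplex.mk i p w).ShortExact

/-- A class of objects closed under extensions. -/
def ClosedUnderExtensions (S : Set C) : Prop :=
  ∀ ⦃A X B : C⦄ (i : A ⟶ X) (p : X ⟶ B), SES i p → A ∈ S → B ∈ S → X ∈ S

/-- A torsion pair `(T, F)` in an abelian category: strict (iso-closed) full
subcategories with no nonzero maps from `T` to `F`, such that every object is an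
extension of an object of `F` by an object of `T`. -/
structure IsTorsionPair (T F : Set C) : Prop where
  isoClosed_torsion : IsoClosed T
  isoClosed_free : IsoClosed F
  hom_zero : ∀ ⦃X Y : C⦄, X ∈ T → Y ∈ F → ∀ f : X ⟶ Y, f = 0
  exists_ses : ∀ X : C, ∃ (A B : C) (i : A ⟶ X) (p : X ⟶ B),
    A ∈ T ∧ B ∈ F ∧ SES i p

/-- `M ⋆ N`: objects that are extensions of an object of `N` by an object of `M`. -/
def star (M N : Set C) : Set C :=
  {X | ∃ (A B : C) (i : A ⟶ X) (p : X ⟶ B), A ∈ M ∧ B ∈ N ∧ SES i p}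

/-- `X` has a filtration `0 = X₀ ⊆ X₁ ⊆ X₂ ⊆ X₃ = X` with `X₁ ∈ U`,
`X₂/X₁ ∈ S` and `X/X₂ ∈ F`. -/
def HasFiltration (U S F : Set C) (X : C) : Prop :=
  ∃ (X₁ X₂ : C) (a : X₁ ⟶ X₂) (b : X₂ ⟶ X), Mono a ∧ Mono b ∧
    X₁ ∈ U ∧ cokernel a ∈ S ∧ cokernel b ∈ F

/-- A filtration triple `(U, S, F)` in an abelian category. -/
structure IsFiltrationTriple (U S F : Set C) : Prop where
  isoClosed_U : IsoClosed U
  isoClosed_S : IsoClosed S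
  isoClosed_F : IsoClosed F
  hom_US : ∀ ⦃X Y : C⦄, X ∈ U → Y ∈ S → ∀ f : X ⟶ Y, f = 0
  hom_UF : ∀ ⦃X Y : C⦄, X ∈ U → Y ∈ F → ∀ f : X ⟶ Y, f = 0
  hom_SF : ∀ ⦃X Y : C⦄, X ∈ S → Y ∈ F → ∀ f : X ⟶ Y, f = 0
  filt : ∀ X : C, HasFiltration U S F X

/-- A wide subcategory: an iso-closed class closed under kernels, cokernels
and extensions. -/
def IsWide (S : Set C) : Prop :=
  IsoClosed S ∧ ClosedUnderExtensions S ∧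
    (∀ ⦃X Y : C⦄ (f : X ⟶ Y), X ∈ S → Y ∈ S → kernel f ∈ S) ∧
    (∀ ⦃X Y : C⦄ (f : X ⟶ Y), X ∈ S → Y ∈ S → cokernel f ∈ S)

end Abelian

theorem aux_pushout_ses [Abelian C] {K F₀ Y F' : C} (ι : K ⟶ F₀) (i : K ⟶ Y)
    (p : Y ⟶ F') (w : i ≫ p = 0) (hses : (ShortComplex.mk i p w).ShortExact)
    (hq0 : ι ≫ (0 : F₀ ⟶ F') = i ≫ p) :
    SES (pushout.inl ι i) (pushout.desc (0 : F₀ ⟶ F') p hq0) := by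
  haveI hmi : Mono i := hses.mono_f
  haveI hep : Epi p := hses.epi_g
  haveI hepS : Epi (ShortComplex.mk i p w).g := hses.epi_g
  have hex := hses.exact
  have hinlq : pushout.inl ι i ≫ pushout.desc (0 : F₀ ⟶ F') p hq0 = 0 :=
    pushout.inl_desc _ _ _
  have hinrq : pushout.inr ι i ≫ pushout.desc (0 : F₀ ⟶ F') p hq0 = p :=
    pushout.inr_desc _ _ _
  haveI hepiq : Epi (pushout.desc (0 : F₀ ⟶ F') p hq0) := by
    refine ⟨fun {Z} a b hab => ?_⟩
    rw [← cancel_epi p, ← hinrq, Category.assoc, Category.assoc, hab]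
  have hcolim : IsColimit (CokernelCofork.ofπ _ hinlq) := by
    refine CokernelCofork.IsColimit.ofπ' _ hinlq (fun {A} k hk => ?_)
    have hik : (ShortComplex.mk i p w).f ≫ (pushout.inr ι i ≫ k) = 0 := by
      show i ≫ pushout.inr ι i ≫ k = 0
      rw [← Category.assoc, ← pushout.condition, Category.assoc, hk, comp_zero]
    refine ⟨hex.desc (pushout.inr ι i ≫ k) hik, ?_⟩
    apply pushout.hom_ext
    · rw [← Category.assoc, hinlq, zero_comp, hk]
    · rw [← Category.assoc, hinrq]
      exact hex.g_desc (pushout.inr ι i ≫ k) hik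
  refine ⟨hinlq, ?_⟩
  haveI : Mono (ShortComplex.mk (pushout.inl ι i) _ hinlq).f :=
    (inferInstance : Mono (pushout.inl ι i))
  haveI : Epi (ShortComplex.mk (pushout.inl ι i) _ hinlq).g := hepiq
  exact ⟨(ShortComplex.mk (pushout.inl ι i) _ hinlq).exact_of_g_is_cokernel hcolim⟩

/-- Wakamatsu's lemma: if `𝓕` is closed under extensions and `f : F₀ ⟶ E` is an
`𝓕`-cover with kernel `K`, then every short exact sequence `0 → K → Y → F' → 0`
with `F' ∈ 𝓕` splits. -/
theorem statement_1 [Abelian C] (𝓕 : Set C) (hext : ClosedUnderExtensions 𝓕)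
    {F₀ E : C} (f : F₀ ⟶ E) (hf : IsCover 𝓕 f) :
    ∀ ⦃Y F' : C⦄ (i : kernel f ⟶ Y) (p : Y ⟶ F'), F' ∈ 𝓕 → SES i p →
      ∃ r : Y ⟶ kernel f, i ≫ r = 𝟙 (kernel f) := by
  intro Y F' i p hF' ⟨w, hses⟩
  haveI hmi : Mono i := hses.mono_f
  haveI hep : Epi p := hses.epi_g
  haveI hepS : Epi (ShortComplex.mk i p w).g := hses.epi_g
  have hex := hses.exact
  have hq0 : kernel.ι f ≫ (0 : F₀ ⟶ F') = i ≫ p := by rw [w, comp_zero]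
  have hsesG := aux_pushout_ses (kernel.ι f) i p w hses hq0
  have hGF : pushout (kernel.ι f) i ∈ 𝓕 :=
    hext (pushout.inl (kernel.ι f) i) (pushout.desc 0 p hq0) hsesG hf.1.1 hF'
  have hg0 : kernel.ι f ≫ f = i ≫ (0 : Y ⟶ E) := by
    rw [kernel.condition, comp_zero]
  obtain ⟨h, hh⟩ := hf.1.2 (pushout.desc f 0 hg0) hGF
  have hinlh : (pushout.inl (kernel.ι f) i ≫ h) ≫ f = f := by
    rw [Category.assoc, hh]; exact pushout.inl_desc _ _ _
  haveI hiso : IsIso (pushout.inl (kernel.ι f) i ≫ h) := hf.2 _ hinlh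
  have hinlt : pushout.inl (kernel.ι f) i ≫
      (h ≫ inv (pushout.inl (kernel.ι f) i ≫ h)) = 𝟙 F₀ := by
    rw [← Category.assoc, IsIso.hom_inv_id]
  have his : i ≫ (pushout.inr (kernel.ι f) i ≫
      (h ≫ inv (pushout.inl (kernel.ι f) i ≫ h))) = kernel.ι f := by
    rw [← Category.assoc, ← pushout.condition, Category.assoc, hinlt, Category.comp_id]
  set s : Y ⟶ F₀ :=
    pushout.inr (kernel.ι f) i ≫ (h ≫ inv (pushout.inl (kernel.ι f) i ≫ h)) with hsdef
  have hisf : (ShortComplex.mk i p w).f ≫ (s ≫ f) = 0 := by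
    show i ≫ s ≫ f = 0
    rw [← Category.assoc, his, kernel.condition]
  obtain ⟨u, hu⟩ := hex.desc' (s ≫ f) hisf
  obtain ⟨v, hv⟩ := hf.1.2 u hF'
  have hker : (s - p ≫ v) ≫ f = 0 := by
    rw [Preadditive.sub_comp, Category.assoc p v f, hv, ← hu, sub_self]
  refine ⟨kernel.lift f (s - p ≫ v) hker, ?_⟩
  rw [← cancel_mono (kernel.ι f), Category.assoc, kernel.lift_ι, Category.id_comp,
    Preadditive.comp_sub, his, ← Category.assoc i p v, w, zero_comp, sub_zero]

end Mut
end

section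
/- Let \((\mathcal{U},\mathcal{S},\mathcal{F})\) be a filtration triple in an abelian category \(\mathcal{A}\). Then \((\mathcal{U}\star\mathcal{S}, \mathcal{F})\) and \((\mathcal{U}, \mathcal{S}\star\mathcal{F})\) are torsion pairs in \(\mathcal{A}\), where \(\mathcal{M}\star\mathcal{N}\) denotes the full subcategory of objects \(X\) fitting in a short exact sequence \(0 \to M \to X \to N \to 0\) with \(M\in\mathcal{M}\), \(N\in\mathcal{N}\). -/
open CategoryTheory Limits

universe v u

namespace Mut

variable {C : Type u} [Category.{v} C]

section Aux

variable [Abelian C]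

lemma ses_of_mono {A X : C} (i : A ⟶ X) [Mono i] : SES i (cokernel.π i) :=
  ⟨cokernel.condition i,
    { exact := ShortComplex.exact_of_g_is_cokernel _ (cokernelIsCokernel i)
      mono_f := ‹_›
      epi_g := inferInstance }⟩

lemma ses_iso {A X B Y : C} {i : A ⟶ X} {p : X ⟶ B} (hs : SES i p) (e : X ≅ Y) :
    SES (i ≫ e.hom) (e.inv ≫ p) := by
  obtain ⟨w, hse⟩ := hs
  have w' : (i ≫ e.hom) ≫ (e.inv ≫ p) = 0 := by
    rw [Category.assoc, e.hom_inv_id_assoc, w]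
  refine ⟨w', ShortComplex.shortExact_of_iso ?_ hse⟩
  exact ShortComplex.isoMk (Iso.refl A) e (Iso.refl B) (by simp) (by simp)

lemma isoClosed_star {M N : Set C} : IsoClosed (star M N) := by
  intro X Y e hX
  obtain ⟨A, B, i, p, hA, hB, hs⟩ := hX
  exact ⟨A, B, i ≫ e.hom, e.inv ≫ p, hA, hB, ses_iso hs e⟩

open Abelian.Pseudoelement in
lemma noether_ses {X₁ X₂ X : C} (a : X₁ ⟶ X₂) (b : X₂ ⟶ X) [Mono a] [Mono b] :
    SES (cokernel.desc a (b ≫ cokernel.π (a ≫ b))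
        (by rw [← Category.assoc]; exact cokernel.condition _))
      (cokernel.desc (a ≫ b) (cokernel.π b)
        (by rw [Category.assoc, cokernel.condition, comp_zero])) := by
  set u : cokernel a ⟶ cokernel (a ≫ b) := cokernel.desc a (b ≫ cokernel.π (a ≫ b))
    (by rw [← Category.assoc]; exact cokernel.condition _) with hu_def
  set v : cokernel (a ≫ b) ⟶ cokernel b := cokernel.desc (a ≫ b) (cokernel.π b)
    (by rw [Category.assoc, cokernel.condition, comp_zero]) with hv_def
  have hu : cokernel.π a ≫ u = b ≫ cokernel.π (a ≫ b) := cokernel.π_desc _ _ _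
  have hv : cokernel.π (a ≫ b) ≫ v = cokernel.π b := cokernel.π_desc _ _ _
  have w : u ≫ v = 0 := by
    rw [← cancel_epi (cokernel.π a), ← Category.assoc, hu, Category.assoc, hv,
      cokernel.condition, comp_zero]
  have hexab : (ShortComplex.mk (a ≫ b) (cokernel.π (a ≫ b))
      (cokernel.condition _)).Exact :=
    ShortComplex.exact_of_g_is_cokernel _ (cokernelIsCokernel _)
  have hexb : (ShortComplex.mk b (cokernel.π b) (cokernel.condition _)).Exact :=
    ShortComplex.exact_of_g_is_cokernel _ (cokernelIsCokernel _)
  have hmono : Mono u := by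
    apply mono_of_zero_of_map_zero
    intro x hx
    obtain ⟨y, hy⟩ := pseudo_surjective_of_epi (cokernel.π a) x
    have h1 : pseudoApply (cokernel.π (a ≫ b)) (pseudoApply b y) = 0 := by
      rw [← Abelian.Pseudoelement.comp_apply, ← hu, Abelian.Pseudoelement.comp_apply, hy, hx]
    obtain ⟨z, hz⟩ := pseudo_exact_of_exact hexab _ h1
    have hz2 : pseudoApply b (pseudoApply a z) = pseudoApply b y := by
      rw [← Abelian.Pseudoelement.comp_apply]; exact hz
    have hz3 : pseudoApply a z = y := pseudo_injective_of_mono b hz2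
    rw [← hy, ← hz3, ← Abelian.Pseudoelement.comp_apply, cokernel.condition]
    exact zero_apply _ _
  have hepi : Epi v := epi_of_epi_fac hv
  refine ⟨w, { exact := ?_, mono_f := hmono, epi_g := hepi }⟩
  apply exact_of_pseudo_exact
  intro m hm
  obtain ⟨x, hx⟩ := pseudo_surjective_of_epi (cokernel.π (a ≫ b)) m
  have h1 : pseudoApply (cokernel.π b) x = 0 := by
    rw [← hv, Abelian.Pseudoelement.comp_apply, hx]; exact hm
  obtain ⟨y, hy⟩ := pseudo_exact_of_exact hexb _ h1
  refine ⟨pseudoApply (cokernel.π a) y, ?_⟩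
  show pseudoApply u (pseudoApply (cokernel.π a) y) = m
  rw [← Abelian.Pseudoelement.comp_apply, hu, Abelian.Pseudoelement.comp_apply, hy, hx]

end Aux

/-- A filtration triple `(U, S, F)` gives torsion pairs `(U ⋆ S, F)` and `(U, S ⋆ F)`. -/
theorem statement_3 [Abelian C] {U S F : Set C} (h : IsFiltrationTriple U S F) :
    IsTorsionPair (star U S) F ∧ IsTorsionPair U (star S F) := by
  constructor
  · exact
      { isoClosed_torsion := isoClosed_star
        isoClosed_free := h.isoClosed_F
        hom_zero := by
          intro X Y hX hY f
          obtain ⟨A, B, i, p, hA, hB, w, hse⟩ := hX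
          have hif : i ≫ f = 0 := h.hom_UF hA hY _
          obtain ⟨g, hg⟩ := CokernelCofork.IsColimit.desc' hse.gIsCokernel f hif
          rw [← hg, h.hom_SF hB hY g, comp_zero]
        exists_ses := by
          intro X
          obtain ⟨X₁, X₂, a, b, ma, mb, hU, hS, hF⟩ := h.filt X
          exact ⟨X₂, cokernel b, b, cokernel.π b,
            ⟨X₁, cokernel a, a, cokernel.π a, hU, hS, ses_of_mono a⟩, hF, ses_of_mono b⟩ }
  · exact
      { isoClosed_torsion := h.isoClosed_U
        isoClosed_free := isoClosed_star
        hom_zero := by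
          intro X Y hX hY f
          obtain ⟨A, B, i, p, hA, hB, w, hse⟩ := hY
          have hfp : f ≫ p = 0 := h.hom_UF hX hB _
          obtain ⟨g, hg⟩ := KernelFork.IsLimit.lift' hse.fIsKernel f hfp
          rw [← hg, h.hom_US hX hA g, zero_comp]
        exists_ses := by
          intro X
          obtain ⟨X₁, X₂, a, b, ma, mb, hU, hS, hF⟩ := h.filt X
          have : Mono (a ≫ b) := mono_comp _ _
          refine ⟨X₁, cokernel (a ≫ b), a ≫ b, cokernel.π (a ≫ b), hU, ?_, ses_of_mono _⟩
          exact ⟨cokernel a, cokernel b, _, _, hS, hF, noether_ses a b⟩ }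

end Mut
end

section
/- Let \(\mathcal{H}\) be an abelian category with torsion pairs \((\mathcal{U},\mathcal{V})\) and \((\mathcal{T},\mathcal{F})\) such that \(\mathcal{U}\subseteq\mathcal{T}\). Then \(\mathcal{T}\cap\mathcal{V}\) is a wide subcategory of \(\mathcal{H}\) if and only if for every morphism \(g : T \to V\) with \(T\in\mathcal{T}\) and \(V\in\mathcal{V}\), the kernel of \(g\) lies in \(\mathcal{T}\) and the cokernel of \(g\) lies in \(\mathcal{V}\). -/
open CategoryTheory Limits

universe v u

namespace Mut

variable {C : Type u} [Category.{v} C]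

section Aux

open scoped Pseudoelement
open CategoryTheory.Abelian

variable [Abelian C]

lemma mem_torsion_of_forall {T F : Set C} (h : IsTorsionPair T F) {X : C}
    (hX : ∀ ⦃Y : C⦄, Y ∈ F → ∀ f : X ⟶ Y, f = 0) : X ∈ T := by
  obtain ⟨A, B, i, p, hA, hB, w, hse⟩ := h.exists_ses X
  have hp : p = 0 := hX hB p
  have hmono : Mono i := hse.mono_f
  have hepi : Epi i := by
    constructor
    intro Z u v huv
    have h0 : i ≫ (u - v) = 0 := by rw [Preadditive.comp_sub, huv, sub_self]
    obtain ⟨d, hd⟩ := CokernelCofork.IsColimit.desc' hse.gIsCokernel (u - v) h0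
    let d₀ : B ⟶ Z := d
    have hd₀ : p ≫ d₀ = u - v := hd
    have : u - v = 0 := by rw [← hd₀, hp, zero_comp]
    rw [← sub_eq_zero]
    exact this
  have : IsIso i := isIso_of_mono_of_epi i
  exact h.isoClosed_torsion (asIso i) hA

lemma mem_free_of_forall {T F : Set C} (h : IsTorsionPair T F) {Y : C}
    (hY : ∀ ⦃X : C⦄, X ∈ T → ∀ f : X ⟶ Y, f = 0) : Y ∈ F := by
  obtain ⟨A, B, i, p, hA, hB, w, hse⟩ := h.exists_ses Y
  have hi : i = 0 := hY hA i
  have hepi : Epi p := hse.epi_g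
  have hmono : Mono p := by
    constructor
    intro Z u v huv
    have h0 : (u - v) ≫ p = 0 := by rw [Preadditive.sub_comp, huv, sub_self]
    obtain ⟨d, hd⟩ := KernelFork.IsLimit.lift' hse.fIsKernel (u - v) h0
    let d₀ : Z ⟶ A := d
    have hd₀ : d₀ ≫ i = u - v := hd
    have : u - v = 0 := by rw [← hd₀, hi, comp_zero]
    rw [← sub_eq_zero]
    exact this
  have : IsIso p := isIso_of_mono_of_epi p
  exact h.isoClosed_free (asIso p).symm hB

lemma torsion_of_epi {T F : Set C} (h : IsTorsionPair T F) {X Q : C} (e : X ⟶ Q) [Epi e]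
    (hX : X ∈ T) : Q ∈ T := by
  apply mem_torsion_of_forall h
  intro Y hY f
  have h0 : e ≫ f = 0 := h.hom_zero hX hY _
  rw [← cancel_epi e, h0, comp_zero]

lemma free_of_mono {T F : Set C} (h : IsTorsionPair T F) {A Y : C} (m : A ⟶ Y) [Mono m]
    (hY : Y ∈ F) : A ∈ F := by
  apply mem_free_of_forall h
  intro X hX f
  have h0 : f ≫ m = 0 := h.hom_zero hX hY _
  rw [← cancel_mono m, h0, zero_comp]

lemma torsion_closedUnderExtensions {T F : Set C} (h : IsTorsionPair T F) :
    ClosedUnderExtensions T := by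
  intro A X B i p hses hA hB
  obtain ⟨w, hse⟩ := hses
  apply mem_torsion_of_forall h
  intro Y hY f
  have h0 : i ≫ f = 0 := h.hom_zero hA hY _
  obtain ⟨d, hd⟩ := CokernelCofork.IsColimit.desc' hse.gIsCokernel f h0
  have hd0 : d = 0 := h.hom_zero hB hY d
  rw [← hd, hd0, comp_zero]

lemma free_closedUnderExtensions {T F : Set C} (h : IsTorsionPair T F) :
    ClosedUnderExtensions F := by
  intro A X B i p hses hA hB
  obtain ⟨w, hse⟩ := hses
  apply mem_free_of_forall h
  intro Y hY f
  have h0 : f ≫ p = 0 := h.hom_zero hY hB _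
  obtain ⟨d, hd⟩ := KernelFork.IsLimit.lift' hse.fIsKernel f h0
  have hd0 : d = 0 := h.hom_zero hY hA d
  rw [← hd, hd0, zero_comp]

/-- If `0 → A → X → X' → 0` is exact and `g : X' ⟶ Y`, then
`0 → A → ker (p ≫ g) → ker g → 0` is exact. -/
lemma ker_ses {A X X' Y : C} (i : A ⟶ X) (p : X ⟶ X') (w : i ≫ p = 0)
    (hse : (ShortComplex.mk i p w).ShortExact) (g : X' ⟶ Y) :
    SES (kernel.lift (p ≫ g) i (by rw [← Category.assoc, w, zero_comp]))
      (kernel.lift g (kernel.ι (p ≫ g) ≫ p) (by rw [Category.assoc, kernel.condition])) := by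
  set i'' : A ⟶ kernel (p ≫ g) := kernel.lift (p ≫ g) i (by rw [← Category.assoc, w, zero_comp])
    with hi''
  set φ : kernel (p ≫ g) ⟶ kernel g :=
    kernel.lift g (kernel.ι (p ≫ g) ≫ p) (by rw [Category.assoc, kernel.condition]) with hφ
  have hi''ι : i'' ≫ kernel.ι (p ≫ g) = i := kernel.lift_ι _ _ _
  have hφι : φ ≫ kernel.ι g = kernel.ι (p ≫ g) ≫ p := kernel.lift_ι _ _ _
  have w' : i'' ≫ φ = 0 := by
    rw [← cancel_mono (kernel.ι g), Category.assoc, hφι, ← Category.assoc, hi''ι, w, zero_comp]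
  have hmono : Mono i'' := by
    have : Mono (i'' ≫ kernel.ι (p ≫ g)) := by rw [hi''ι]; exact hse.mono_f
    exact mono_of_mono i'' (kernel.ι (p ≫ g))
  have hepip : Epi p := hse.epi_g
  have hepi : Epi φ := by
    apply Pseudoelement.epi_of_pseudo_surjective
    intro y
    have hy : g (kernel.ι g y) = 0 := by
      rw [← Pseudoelement.comp_apply, kernel.condition, Pseudoelement.zero_apply]
    obtain ⟨x, hx⟩ := Pseudoelement.pseudo_surjective_of_epi p (kernel.ι g y)
    have hx0 : (p ≫ g) x = 0 := by rw [Pseudoelement.comp_apply, hx, hy]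
    have hexact : (ShortComplex.mk (kernel.ι (p ≫ g)) (p ≫ g) (kernel.condition _)).Exact :=
      ShortComplex.exact_of_f_is_kernel _ (kernelIsKernel _)
    obtain ⟨a, ha⟩ := Pseudoelement.pseudo_exact_of_exact hexact x hx0
    refine ⟨a, Pseudoelement.pseudo_injective_of_mono (kernel.ι g) ?_⟩
    rw [← Pseudoelement.comp_apply, hφι, Pseudoelement.comp_apply, ha, hx]
  have hlim : IsLimit (KernelFork.ofι i'' w') := by
    apply KernelFork.IsLimit.ofι'
    intro A' k hk
    have hkp : (k ≫ kernel.ι (p ≫ g)) ≫ p = 0 := by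
      rw [Category.assoc, ← hφι, ← Category.assoc, hk, zero_comp]
    obtain ⟨l, hl⟩ := KernelFork.IsLimit.lift' hse.fIsKernel (k ≫ kernel.ι (p ≫ g)) hkp
    refine ⟨l, ?_⟩
    rw [← cancel_mono (kernel.ι (p ≫ g)), Category.assoc, hi''ι]
    exact hl
  exact ⟨w', { exact := ShortComplex.exact_of_f_is_kernel _ hlim,
               mono_f := hmono, epi_g := hepi }⟩

/-- If `0 → B → Y → Y'' → 0` is exact and `g : X' ⟶ B`, then
`0 → coker g → coker (g ≫ j) → Y'' → 0` is exact. -/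
lemma coker_ses {X' B Y Y'' : C} (j : B ⟶ Y) (q : Y ⟶ Y'') (w : j ≫ q = 0)
    (hse : (ShortComplex.mk j q w).ShortExact) (g : X' ⟶ B) :
    SES (cokernel.desc g (j ≫ cokernel.π (g ≫ j)) (by rw [← Category.assoc, cokernel.condition]))
      (cokernel.desc (g ≫ j) q (by rw [Category.assoc, w, comp_zero])) := by
  set ψ : cokernel g ⟶ cokernel (g ≫ j) :=
    cokernel.desc g (j ≫ cokernel.π (g ≫ j)) (by rw [← Category.assoc, cokernel.condition])
    with hψ
  set χ : cokernel (g ≫ j) ⟶ Y'' :=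
    cokernel.desc (g ≫ j) q (by rw [Category.assoc, w, comp_zero]) with hχ
  have hψπ : cokernel.π g ≫ ψ = j ≫ cokernel.π (g ≫ j) := cokernel.π_desc _ _ _
  have hχπ : cokernel.π (g ≫ j) ≫ χ = q := cokernel.π_desc _ _ _
  have w' : ψ ≫ χ = 0 := by
    rw [← cancel_epi (cokernel.π g), ← Category.assoc, hψπ, Category.assoc, hχπ, w, comp_zero]
  have hepi : Epi χ := by
    have : Epi (cokernel.π (g ≫ j) ≫ χ) := by rw [hχπ]; exact hse.epi_g
    exact epi_of_epi (cokernel.π (g ≫ j)) χ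
  have hmonoj : Mono j := hse.mono_f
  have hmono : Mono ψ := by
    apply Pseudoelement.mono_of_zero_of_map_zero
    intro a ha
    obtain ⟨b, hb⟩ := Pseudoelement.pseudo_surjective_of_epi (cokernel.π g) a
    rw [← hb, ← Pseudoelement.comp_apply, hψπ, Pseudoelement.comp_apply] at ha
    have hexact : (ShortComplex.mk (g ≫ j) (cokernel.π (g ≫ j)) (cokernel.condition _)).Exact :=
      ShortComplex.exact_of_g_is_cokernel _ (cokernelIsCokernel _)
    obtain ⟨x, hx⟩ := Pseudoelement.pseudo_exact_of_exact hexact (j b) ha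
    rw [Pseudoelement.comp_apply] at hx
    have hgx : g x = b := Pseudoelement.pseudo_injective_of_mono j hx
    rw [← hb, ← hgx, ← Pseudoelement.comp_apply, cokernel.condition,
      Pseudoelement.zero_apply]
  have hcolim : IsColimit (CokernelCofork.ofπ χ w') := by
    apply CokernelCofork.IsColimit.ofπ'
    intro A' k hk
    have hjk : j ≫ (cokernel.π (g ≫ j) ≫ k) = 0 := by
      rw [← Category.assoc, ← hψπ, Category.assoc, hk, comp_zero]
    obtain ⟨l, hl⟩ := CokernelCofork.IsColimit.desc' hse.gIsCokernel
      (cokernel.π (g ≫ j) ≫ k) hjk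
    refine ⟨l, ?_⟩
    rw [← cancel_epi (cokernel.π (g ≫ j)), ← Category.assoc, hχπ]
    exact hl
  exact ⟨w', { exact := ShortComplex.exact_of_g_is_cokernel _ hcolim,
               mono_f := hmono, epi_g := hepi }⟩

end Aux

/-- For nested torsion pairs, `T ∩ V` is wide iff kernels of maps `T → V` lie in
`T` and cokernels lie in `V`. -/
theorem statement_5 [Abelian C] {U V T F : Set C}
    (hUV : IsTorsionPair U V) (hTF : IsTorsionPair T F) (hUT : U ⊆ T) :
    IsWide (T ∩ V) ↔
      ∀ ⦃X Y : C⦄ (g : X ⟶ Y), X ∈ T → Y ∈ V →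
        kernel g ∈ T ∧ cokernel g ∈ V := by
  have hFV : F ⊆ V := by
    intro Z hZ
    apply mem_free_of_forall hUV
    intro X hX f
    exact hTF.hom_zero (hUT hX) hZ f
  constructor
  · rintro ⟨hiso, hext, hker, hcoker⟩ X Y g hX hY
    obtain ⟨A, X', i, p, hA, hX', w1, hse1⟩ := hUV.exists_ses X
    obtain ⟨B, Y'', j, q, hB, hY'', w2, hse2⟩ := hTF.exists_ses Y
    have hepip : Epi p := hse1.epi_g
    have hmonoj : Mono j := hse2.mono_f
    have hX'T : X' ∈ T := torsion_of_epi hTF p hX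
    have hX'W : X' ∈ T ∩ V := ⟨hX'T, hX'⟩
    have hBW : B ∈ T ∩ V := ⟨hB, free_of_mono hUV j hY⟩
    -- factor `g` through `p`
    have hig : i ≫ g = 0 := hUV.hom_zero hA hY _
    obtain ⟨g'₀, hg'₀⟩ := CokernelCofork.IsColimit.desc' hse1.gIsCokernel g hig
    let g' : X' ⟶ Y := g'₀
    have hg' : p ≫ g' = g := hg'₀
    -- factor `g'` through `j`
    have hgq : g' ≫ q = 0 := hTF.hom_zero hX'T hY'' _
    obtain ⟨g''₀, hg''₀⟩ := KernelFork.IsLimit.lift' hse2.fIsKernel g' hgq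
    let g'' : X' ⟶ B := g''₀
    have hg'' : g'' ≫ j = g' := hg''₀
    have hkerW : kernel g'' ∈ T ∩ V := hker g'' hX'W hBW
    have hcokW : cokernel g'' ∈ T ∩ V := hcoker g'' hX'W hBW
    constructor
    · -- kernel g ∈ T
      have hses := ker_ses i p w1 hse1 g''
      have hkpg : kernel (p ≫ g'') ∈ T :=
        torsion_closedUnderExtensions hTF _ _ hses (hUT hA) hkerW.1
      have hgeq : (p ≫ g'') ≫ j = g := by rw [Category.assoc, hg'', hg']
      rw [← hgeq]
      exact hTF.isoClosed_torsion (kernelCompMono (p ≫ g'') j).symm hkpg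
    · -- cokernel g ∈ V
      have hses := coker_ses j q w2 hse2 g''
      have hcgj : cokernel (g'' ≫ j) ∈ V :=
        free_closedUnderExtensions hUV _ _ hses hcokW.2 (hFV hY'')
      have hgeq : p ≫ (g'' ≫ j) = g := by rw [hg'', hg']
      rw [← hgeq]
      exact hUV.isoClosed_free (cokernelEpiComp p (g'' ≫ j)).symm hcgj
  · intro hcond
    refine ⟨?_, ?_, ?_, ?_⟩
    · intro X Y e hX
      exact ⟨hTF.isoClosed_torsion e hX.1, hUV.isoClosed_free e hX.2⟩
    · intro A X B i p hses hA hB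
      exact ⟨torsion_closedUnderExtensions hTF i p hses hA.1 hB.1,
        free_closedUnderExtensions hUV i p hses hA.2 hB.2⟩
    · intro X Y f hX hY
      exact ⟨(hcond f hX.1 hY.2).1, free_of_mono hUV (kernel.ι f) hX.2⟩
    · intro X Y f hX hY
      exact ⟨torsion_of_epi hTF (cokernel.π f) hY.1, (hcond f hX.1 hY.2).2⟩

end Mut
end

section
/- Let \(\mathcal{H}\) be an abelian length category with a torsion pair \((\mathcal{X},\mathcal{Y})\). Define \(\widecheck{\mathcal{X}} = \{X \in \mathcal{H} \mid \text{every morphism } f : X \to Y \text{ with } Y\in\mathcal{Y} \text{ has } \mathrm{coker}(f)\in\mathcal{Y}\}\). Then \(\widecheck{\mathcal{X}}\) contains \(\mathcal{X}\) and is a torsion class in \(\mathcal{H}\), i.e. \(\widecheck{\mathcal{X}}\) is closed under quotients and extensions. -/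
open CategoryTheory Limits

universe v u

namespace Mut

variable {C : Type u} [Category.{v} C]

/-- The class `∨X` of objects all of whose cokernels of maps to `𝒴` stay in `𝒴`. -/
def torsCheck [Abelian C] (𝒴 : Set C) : Set C :=
  {A | ∀ ⦃B : C⦄ (f : A ⟶ B), B ∈ 𝒴 → cokernel f ∈ 𝒴}

section TorsCheck

variable [Abelian C]

noncomputable def cokernelCompCokernelπIso {A X Y : C} (i : A ⟶ X) (f : X ⟶ Y) :
    cokernel (f ≫ cokernel.π (i ≫ f)) ≅ cokernel f where
  hom := cokernel.desc _ (cokernel.desc (i ≫ f) (cokernel.π f)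
      (by rw [Category.assoc, cokernel.condition, comp_zero])) (by
    rw [Category.assoc, cokernel.π_desc, cokernel.condition])
  inv := cokernel.desc f (cokernel.π (i ≫ f) ≫ cokernel.π _) (by
    rw [← Category.assoc, cokernel.condition])
  hom_inv_id := by
    apply coequalizer.hom_ext
    rw [cokernel.π_desc_assoc, Category.comp_id]
    apply (cancel_epi (cokernel.π (i ≫ f))).mp
    rw [cokernel.π_desc_assoc, cokernel.π_desc]
  inv_hom_id := by
    apply coequalizer.hom_ext
    rw [cokernel.π_desc_assoc, Category.comp_id, Category.assoc,
      cokernel.π_desc, cokernel.π_desc]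

theorem IsTorsionPair.subset_torsCheck {𝒳 𝒴 : Set C} (h : IsTorsionPair 𝒳 𝒴) :
    𝒳 ⊆ torsCheck 𝒴 := by
  intro A hA B f hB
  obtain rfl : f = 0 := h.hom_zero hA hB f
  exact h.isoClosed_free cokernelZeroIsoTarget.symm hB

theorem torsCheck_of_epi {𝒴 : Set C} (h𝒴 : IsoClosed 𝒴) {A B : C} (p : A ⟶ B) [Epi p]
    (hA : A ∈ torsCheck 𝒴) : B ∈ torsCheck 𝒴 :=
  fun _ f hY => h𝒴 (cokernelEpiComp p f) (hA (p ≫ f) hY)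

/-- For `0 ⟶ A ⟶ X ⟶ B ⟶ 0` and `f : X ⟶ Y`, compute `coker f` in two steps: first
`Y' := coker (i ≫ f) ∈ 𝒴`, then `coker f ≅ coker g` for the map `g : B ⟶ Y'` induced by `f`. -/
theorem closedUnderExtensions_torsCheck {𝒴 : Set C} (h𝒴 : IsoClosed 𝒴) :
    ClosedUnderExtensions (torsCheck 𝒴) := by
  rintro A X B i p ⟨_, hses⟩ hA hB Y f hY
  have hkill : i ≫ f ≫ cokernel.π (i ≫ f) = 0 := by
    rw [← Category.assoc, cokernel.condition]
  have : Epi p := hses.epi_g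
  obtain ⟨g, hg⟩ := hses.exact.desc' (f ≫ cokernel.π (i ≫ f)) hkill
  have hcoker : cokernel g ≅ cokernel f :=
    (cokernelEpiComp p g).symm ≪≫ cokernelIsoOfEq hg ≪≫ cokernelCompCokernelπIso i f
  exact h𝒴 hcoker (hB g (hA (i ≫ f) hY))

end TorsCheck

theorem statement_6_general [Abelian C]
    {𝒳 𝒴 : Set C} (h : IsTorsionPair 𝒳 𝒴) :
    𝒳 ⊆ torsCheck 𝒴 ∧
    (∀ ⦃A B : C⦄ (p : A ⟶ B), Epi p → A ∈ torsCheck 𝒴 → B ∈ torsCheck 𝒴) ∧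
    ClosedUnderExtensions (torsCheck 𝒴) :=
  ⟨h.subset_torsCheck, fun _ _ p _ hA => torsCheck_of_epi h.isoClosed_free p hA,
    closedUnderExtensions_torsCheck h.isoClosed_free⟩

/-- In an abelian length category, for a torsion pair `(𝒳, 𝒴)`, the class
`∨𝒳 = torsCheck 𝒴` contains `𝒳` and is a torsion class (closed under quotients
and extensions). -/
theorem statement_6 [Abelian C]
    (hlen : ∀ X : C, IsNoetherianObject X ∧ IsArtinianObject X)
    {𝒳 𝒴 : Set C} (h : IsTorsionPair 𝒳 𝒴) :
    𝒳 ⊆ torsCheck 𝒴 ∧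
    (∀ ⦃A B : C⦄ (p : A ⟶ B), Epi p → A ∈ torsCheck 𝒴 → B ∈ torsCheck 𝒴) ∧
    ClosedUnderExtensions (torsCheck 𝒴) :=
  statement_6_general h

end Mut
end

section
/- Let \(\mathcal{H}\) be an abelian category with an injective cogenerator \(E\), let \((\mathcal{T},\mathcal{F})\) be a torsion pair in \(\mathcal{H}\), and let \(f : F_0 \to E\) be an \(\mathcal{F}\)-precover of \(E\). Then \(\mathcal{F} = \mathrm{Cogen}(F_0)\), i.e. every object of \(\mathcal{F}\) embeds into a product of copies of \(F_0\) (assuming the relevant products exist in \(\mathcal{H}\)). -/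
open CategoryTheory Limits

universe v u

namespace Mut

variable {C : Type u} [Category.{v} C]

/-- If `E` is an injective cogenerator, `(T, F)` a torsion pair and `f : F₀ ⟶ E`
an `F`-precover, then `F = Cogen F₀`. -/
theorem statement_13 [Abelian C] [HasLimits C]
    {E : C} (hEinj : Injective E)
    (hcog : ∀ X : C, ∃ (ι : Type v) (m : X ⟶ ∏ᶜ (fun _ : ι => E)), Mono m)
    {T F : Set C} (h : IsTorsionPair T F)
    {F₀ : C} (f : F₀ ⟶ E) (hf : IsPrecover F f) :
    F = {X | ∃ (ι : Type v) (m : X ⟶ ∏ᶜ (fun _ : ι => F₀)), Mono m} := by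
  ext X
  simp only [Set.mem_setOf_eq]
  constructor
  · intro hX
    obtain ⟨ι₀, m₀, hm₀⟩ := hcog X
    choose lift hlift using fun g : X ⟶ E => hf.2 g hX
    refine ⟨(X ⟶ E), Pi.lift lift, ?_⟩
    refine Preadditive.mono_of_cancel_zero _ (fun {Z} u hu => ?_)
    have hcomp : ∀ g : X ⟶ E, u ≫ g = 0 := by
      intro g
      have h1 : u ≫ lift g = 0 := by
        have := hu =≫ Pi.π (fun _ : X ⟶ E => F₀) g
        simpa using this
      rw [← hlift g, ← Category.assoc, h1, zero_comp]
    have hzero : u ≫ m₀ = 0 := by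
      apply limit.hom_ext
      intro j
      simp [Category.assoc, hcomp (m₀ ≫ limit.π _ j)]
    exact zero_of_comp_mono m₀ hzero
  · rintro ⟨ι, m, hm⟩
    obtain ⟨A, B, i, p, hA, hB, w, hse⟩ := h.exists_ses X
    have hi : i = 0 := by
      have : i ≫ m = 0 := by
        apply limit.hom_ext
        intro j
        simpa using h.hom_zero hA hf.1 (i ≫ m ≫ limit.π _ j)
      rw [← cancel_mono m, this, zero_comp]
    have : Mono p := hse.exact.mono_g hi
    have : Epi p := hse.epi_g
    have : IsIso p := isIso_of_mono_of_epi p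
    exact h.isoClosed_free (asIso p).symm hB

end Mut
end

section
/- Let \((\mathcal{U},\mathcal{V})\) be a torsion pair in an abelian category \(\mathcal{H}\) and let \(M\) be a torsion-free, almost torsion object for \((\mathcal{U},\mathcal{V})\). Then \(M\) is a brick: every nonzero endomorphism of \(M\) is an isomorphism. -/
open CategoryTheory Limits

universe v u

namespace Mut

variable {C : Type u} [Category.{v} C]

/-- `M` is a torsion-free, almost torsion object for the torsion pair `(U, V)`. -/
def TFAlmostTorsion [Abelian C] (U V : Set C) (M : C) : Prop :=
  M ∈ V ∧ ¬ IsZero M ∧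
    (∀ ⦃Q : C⦄ (p : M ⟶ Q), Epi p → ¬ IsIso p → Q ∈ U) ∧
    (∀ ⦃Y Z : C⦄ (i : M ⟶ Y) (p : Y ⟶ Z), SES i p → Y ∈ V → Z ∈ V)

/-- A torsion-free, almost torsion object is a brick. -/
theorem statement_14 [Abelian C] {U V : Set C} (hUV : IsTorsionPair U V)
    {M : C} (hM : TFAlmostTorsion U V M) :
    ∀ f : M ⟶ M, f ≠ 0 → IsIso f := by
  intro f hf
  -- Step 1: f is mono
  have hmono : Mono f := by
    by_cases he : IsIso (factorThruImage f)
    · rw [← image.fac f]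
      exact mono_comp _ _
    · exfalso
      have hI : image f ∈ U := hM.2.2.1 (factorThruImage f) inferInstance he
      have : image.ι f = 0 := hUV.hom_zero hI hM.1 _
      exact hf (by rw [← image.fac f, this, comp_zero])
  -- Step 2: cokernel f ∈ V
  have hses : SES f (cokernel.π f) := by
    refine ⟨cokernel.condition f, ?_⟩
    refine ShortComplex.ShortExact.mk' ?_ hmono inferInstance
    exact ShortComplex.exact_of_g_is_cokernel _ (cokernelIsCokernel f)
  have hcV : cokernel f ∈ V := hM.2.2.2 f (cokernel.π f) hses hM.1
  -- Step 3: cokernel.π f is not an iso, so cokernel f ∈ U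
  have hnotiso : ¬ IsIso (cokernel.π f) := by
    intro h
    apply hf
    have := cokernel.condition f
    rwa [← cancel_mono (cokernel.π f), zero_comp]
  have hcU : cokernel f ∈ U := hM.2.2.1 (cokernel.π f) inferInstance hnotiso
  have hzero : IsZero (cokernel f) := by
    rw [IsZero.iff_id_eq_zero]
    exact hUV.hom_zero hcU hcV _
  have hepi : Epi f := Preadditive.epi_of_isZero_cokernel f hzero
  exact isIso_of_mono_of_epi f

end Mut
end

section
/- Let \((\mathcal{U},\mathcal{V})\) be a torsion pair in an abelian category \(\mathcal{H}\) and let \(M, M'\) be torsion-free, almost torsion objects for \((\mathcal{U},\mathcal{V})\). If there exists a nonzero morphism \(M \to M'\), then \(M \cong M'\). Consequently, the torsion-free, almost torsion objects form a semibrick. -/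
open CategoryTheory Limits

universe v u

namespace Mut

variable {C : Type u} [Category.{v} C]

/-- A nonzero morphism between torsion-free, almost torsion objects is an
isomorphism; hence they form a semibrick. -/
theorem statement_15 [Abelian C] {U V : Set C} (hUV : IsTorsionPair U V)
    {M M' : C} (hM : TFAlmostTorsion U V M) (hM' : TFAlmostTorsion U V M')
    (f : M ⟶ M') (hf : f ≠ 0) :
    Nonempty (M ≅ M') := by
  -- Step 1: f is a monomorphism.
  have hMono : Mono f := by
    by_cases hIso : IsIso (factorThruImage f)
    · rw [← image.fac f]
      exact mono_comp _ _
    · exfalso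
      have hImU : image f ∈ U :=
        hM.2.2.1 (factorThruImage f) inferInstance hIso
      have hι0 : image.ι f = 0 := hUV.hom_zero hImU hM'.1 _
      apply hf
      rw [← image.fac f, hι0, comp_zero]
  -- Step 2: the cokernel sequence.
  have hSES : SES f (cokernel.π f) := by
    refine ⟨cokernel.condition f, ?_⟩
    refine ⟨(ShortComplex.mk f (cokernel.π f)
      (cokernel.condition f)).exact_of_g_is_cokernel (cokernelIsCokernel f)⟩
  have hCokV : cokernel f ∈ V := hM.2.2.2 f (cokernel.π f) hSES hM'.1
  by_cases hIso : IsIso (cokernel.π f)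
  · exfalso
    apply hf
    have := cokernel.condition f
    rwa [← cancel_mono (cokernel.π f), zero_comp]
  · have hCokU : cokernel f ∈ U := hM'.2.2.1 (cokernel.π f) inferInstance hIso
    have hId : 𝟙 (cokernel f) = 0 := hUV.hom_zero hCokU hCokV _
    have hZero : IsZero (cokernel f) := IsZero.of_iso (isZero_zero C)
      { hom := 0, inv := 0, hom_inv_id := by simp [hId], inv_hom_id := by simp }
    have hEpi : Epi f := Preadditive.epi_of_isZero_cokernel f hZero
    have : IsIso f := isIso_of_mono_of_epi f
    exact ⟨asIso f⟩

end Mut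
end

section
/- Let \(\mathcal{H}\) be an abelian length category and let \((\mathcal{U},\mathcal{V})\), \((\mathcal{T},\mathcal{F})\) be torsion pairs with \(\mathcal{U} \subsetneq \mathcal{T}\). Suppose that \(\mathcal{T}\cap\mathcal{V} = \mathrm{filt}(M)\) for some brick \(M\), where \(\mathrm{filt}(M)\) is the class of objects with a finite filtration by copies of \(M\). Then the inclusion \(\mathcal{U} \subseteq \mathcal{T}\) is a minimal inclusion of torsion classes: any torsion class \(\mathcal{X}\) with \(\mathcal{U} \subseteq \mathcal{X} \subseteq \mathcal{T}\) equals \(\mathcal{U}\) or \(\mathcal{T}\). -/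
open CategoryTheory Limits

universe v u

namespace Mut

variable {C : Type u} [Category.{v} C]

/-- Objects admitting a finite filtration with factors in `S`. -/
inductive FiltFin [Abelian C] (S : Set C) : C → Prop
  | of_isZero {X : C} (h : IsZero X) : FiltFin S X
  | of_ext {A X B : C} (i : A ⟶ X) (p : X ⟶ B) (hse : SES i p)
      (hA : FiltFin S A) (hB : B ∈ S) : FiltFin S X

/-!
Every object of `T` is an extension of its `V`-quotient, which lies in `T ∩ V = filt M`, by its
`U`-part. Hence a torsion class `𝒳` between `U` and `T` is all of `T` as soon as it contains `M`.
If it does not, the `V`-quotient of any `X ∈ 𝒳` is an object of `filt M` with no quotient `M`,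
i.e. zero, so `X ∈ U`.
-/

section TorsionClass

variable [Abelian C]

lemma SES.isIso_of_eq_zero {A X B : C} {i : A ⟶ X} {p : X ⟶ B} (hse : SES i p)
    (hp : p = 0) : IsIso i := by
  obtain ⟨_, se⟩ := hse
  have := se.mono_f
  obtain ⟨l, hl⟩ := se.exact.lift' (𝟙 X) (by simp [hp])
  have : IsSplitEpi i := ⟨⟨⟨l, hl⟩⟩⟩
  exact isIso_of_mono_of_epi i

namespace IsTorsionPair

variable {T F : Set C} (hTF : IsTorsionPair T F)
include hTF

lemma mem_iff_forall_hom_eq_zero (X : C) :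
    X ∈ T ↔ ∀ ⦃Z : C⦄, Z ∈ F → ∀ f : X ⟶ Z, f = 0 := by
  refine ⟨fun hX _ hZ f => hTF.hom_zero hX hZ f, fun hX => ?_⟩
  obtain ⟨A, B, i, p, hA, hB, hse⟩ := hTF.exists_ses X
  have := hse.isIso_of_eq_zero (hX hB p)
  exact hTF.isoClosed_torsion (asIso i) hA

lemma mem_of_epi {X Q : C} (p : X ⟶ Q) [Epi p] (hX : X ∈ T) : Q ∈ T := by
  rw [hTF.mem_iff_forall_hom_eq_zero]
  intro Z hZ f
  rw [← cancel_epi p, hTF.hom_zero hX hZ (p ≫ f), comp_zero]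

lemma mem_of_ses {A X B : C} {i : A ⟶ X} {p : X ⟶ B} (hse : SES i p) (hA : A ∈ T)
    (hB : B ∈ T) : X ∈ T := by
  rw [hTF.mem_iff_forall_hom_eq_zero]
  intro Z hZ f
  obtain ⟨_, se⟩ := hse
  have := se.epi_g
  obtain ⟨g, rfl⟩ := se.exact.desc' f (hTF.hom_zero hA hZ _)
  rw [hTF.hom_zero hB hZ g, comp_zero]

lemma mem_of_isZero {X : C} (hX : IsZero X) : X ∈ T :=
  (hTF.mem_iff_forall_hom_eq_zero X).2 fun _ _ f => hX.eq_of_src f 0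

lemma mem_of_filtFin {S : Set C} (hS : S ⊆ T) {X : C} (hX : FiltFin S X) : X ∈ T := by
  induction hX with
  | of_isZero hz => exact hTF.mem_of_isZero hz
  | of_ext _ _ hse _ hB ih => exact hTF.mem_of_ses hse ih (hS hB)

end IsTorsionPair

lemma IsTorsionPair.mem_star_inter {U V T F : Set C} (hUV : IsTorsionPair U V)
    (hTF : IsTorsionPair T F) {X : C} (hX : X ∈ T) : X ∈ star U (T ∩ V) := by
  obtain ⟨A, B, i, p, hA, hB, hse⟩ := hUV.exists_ses X
  have := hse.2.epi_g
  exact ⟨A, B, i, p, hA, ⟨hTF.mem_of_epi p hX, hB⟩, hse⟩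

lemma FiltFin.exists_epi_of_not_isZero {S : Set C} {X : C} (hX : FiltFin S X)
    (hX0 : ¬ IsZero X) : ∃ B ∈ S, ∃ p : X ⟶ B, Epi p := by
  cases hX with
  | of_isZero hz => exact absurd hz hX0
  | of_ext _ p hse _ hB => exact ⟨_, hB, p, hse.2.epi_g⟩

end TorsionClass

theorem statement_16_general [Abelian C]
    {U V T F : Set C} (hUV : IsTorsionPair U V) (hTF : IsTorsionPair T F)
    {M : C}
    (hS : T ∩ V = {X | FiltFin ({M} : Set C) X}) :
    ∀ 𝒳 : Set C, (∃ 𝒴 : Set C, IsTorsionPair 𝒳 𝒴) →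
      U ⊆ 𝒳 → 𝒳 ⊆ T → 𝒳 = U ∨ 𝒳 = T := by
  rintro 𝒳 ⟨𝒴, h𝒳⟩ hU𝒳 h𝒳T
  by_cases hM : M ∈ 𝒳
  · refine Or.inr (h𝒳T.antisymm fun Y hY => ?_)
    obtain ⟨A, B, i, p, hA, hB, hse⟩ := hUV.mem_star_inter hTF hY
    rw [hS] at hB
    exact h𝒳.mem_of_ses hse (hU𝒳 hA) (h𝒳.mem_of_filtFin (Set.singleton_subset_iff.2 hM) hB)
  · refine Or.inl (Set.Subset.antisymm (fun X hX => ?_) hU𝒳)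
    obtain ⟨A, B, i, p, hA, ⟨hB𝒳, hBV⟩, hse⟩ := hUV.mem_star_inter h𝒳 hX
    have hBfilt : B ∈ T ∩ V := ⟨h𝒳T hB𝒳, hBV⟩
    rw [hS] at hBfilt
    have hB0 : IsZero B := by
      by_contra hB0
      obtain ⟨_, rfl, q, _⟩ := hBfilt.exists_epi_of_not_isZero hB0
      exact hM (h𝒳.mem_of_epi q hB𝒳)
    exact hUV.mem_of_ses hse hA (hUV.mem_of_isZero hB0)

/-- In an abelian length category, if `T ∩ V = filt M` for a brick `M`, then
`U ⊆ T` is a minimal inclusion of torsion classes. -/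
theorem statement_16 [Abelian C]
    (hlen : ∀ X : C, IsNoetherianObject X ∧ IsArtinianObject X)
    {U V T F : Set C} (hUV : IsTorsionPair U V) (hTF : IsTorsionPair T F)
    (hUT : U ⊆ T) (hne : U ≠ T)
    {M : C} (hMnz : ¬ IsZero M) (hMbrick : ∀ f : M ⟶ M, f = 0 ∨ IsIso f)
    (hS : T ∩ V = {X | FiltFin ({M} : Set C) X}) :
    ∀ 𝒳 : Set C, (∃ 𝒴 : Set C, IsTorsionPair 𝒳 𝒴) →
      U ⊆ 𝒳 → 𝒳 ⊆ T → 𝒳 = U ∨ 𝒳 = T :=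
  statement_16_general hUV hTF hS

end Mut
end

section
/- Let \(\mathcal{H}\) be an abelian category, \((\mathcal{U},\mathcal{V})\) a torsion pair, and \(M\) a torsion-free, almost torsion object for \((\mathcal{U},\mathcal{V})\) which lies in a torsion class \(\mathcal{T} \supseteq \mathcal{U}\) of another torsion pair \((\mathcal{T},\mathcal{F})\). Then \(M\) is a simple object of the full subcategory \(\mathcal{S} = \mathcal{T}\cap\mathcal{V}\), in the sense that \(M \in \mathcal{S}\) and \(M\) has no nonzero proper subobject \(K\) with \(K \in \mathcal{S}\) and \(M/K \in \mathcal{S}\). -/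
open CategoryTheory Limits

universe v u

namespace Mut

variable {C : Type u} [Category.{v} C]

/-- A torsion-free, almost torsion object for `(U, V)` lying in a bigger torsion
class `T ⊇ U` is a simple object of `S = T ∩ V`: it lies in `S` and has no
nonzero proper subobject `K` with both `K ∈ S` and `M/K ∈ S`. -/
theorem statement_18 [Abelian C] {U V T F : Set C}
    (hUV : IsTorsionPair U V) (hTF : IsTorsionPair T F) (hUT : U ⊆ T)
    {M : C} (hM : TFAlmostTorsion U V M) (hMT : M ∈ T) :
    M ∈ T ∩ V ∧
      ∀ ⦃K : C⦄ (i : K ⟶ M), Mono i → ¬ IsZero K → ¬ IsIso i →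
        ¬ (K ∈ T ∩ V ∧ cokernel i ∈ T ∩ V) := by
  refine ⟨⟨hMT, hM.1⟩, ?_⟩
  rintro K i hmono hK hiso ⟨hKS, hQS⟩
  -- cokernel.π i is not an iso
  have hπ : ¬ IsIso (cokernel.π i) := by
    intro h
    have : i = 0 := by
      have := cokernel.condition i
      rwa [← cancel_mono (cokernel.π i), zero_comp]
    apply hK
    rw [IsZero.iff_id_eq_zero, ← cancel_mono i, this]; simp
  have hU : cokernel i ∈ U := hM.2.2.1 (cokernel.π i) inferInstance hπ
  have hzero : IsZero (cokernel i) := by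
    rw [IsZero.iff_id_eq_zero]
    exact hUV.hom_zero hU hQS.2 _
  have : Epi i := Preadditive.epi_of_isZero_cokernel i hzero
  exact hiso (isIso_of_mono_of_epi i)

end Mut
end
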